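/- Let (V,d) be a finite metric space with ω : V → ℝ≥0 and f : V → ℝ≥0. For nonempty R ⊆ V let C_ship(R) = ∑_{v∈V} ω(v)·d(v,R), C_facil(R) = ∑_{r∈R} f(r). Let R₁, R₂ ⊆ V be disjoint, R₁ nonempty, and suppose |R₁ ∪ R₂| ≥ 2. Assign each v ∈ V to a nearest server σ(v) ∈ R₁ and set ω'(r) = ∑_{v:σ(v)=r} ω(v). Then C_facil(R₁∪R₂) + max_{r ∈ R₁∪R₂} C_ship((R₁∪R₂)∖{r}) ≤ [C_facil(R₁) + C_ship(R₁)] + [C_facil(R₂) + max_{r ∈ R₁} ω'(r)·d(r,(R₁∪R₂)∖{r})]. -/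

import Mathlib

/-
After the failure of a facility `r`, send each client `v` to its nearest server `σ v ∈ R₁`.
If `σ v ≠ r` this server survives and costs `d(v, R₁)`; otherwise route on from `r` to the
nearest surviving facility, which by the triangle inequality costs at most
`d(v, R₁) + d(r, (R₁ ∪ R₂) ∖ {r})`. Summing, the extra shipping cost is `ω' r · d(r, (R₁ ∪ R₂) ∖ {r})`,
which vanishes unless `r ∈ R₁`.
-/

/-- Distance from a point to a finite set (0 if the set is empty). -/
noncomputable def ddist {V : Type*} [MetricSpace V] (x : V) (S : Finset V) : ℝ :=
  if h : S.Nonempty then S.inf' h (fun s => dist x s) else 0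

section ddist

variable {V : Type*} [MetricSpace V]

lemma ddist_nonneg (x : V) (S : Finset V) : 0 ≤ ddist x S := by
  unfold ddist
  split_ifs
  · exact Finset.le_inf' _ _ fun _ _ => dist_nonneg
  · exact le_rfl

lemma ddist_le_dist (x : V) {S : Finset V} {s : V} (hs : s ∈ S) : ddist x S ≤ dist x s := by
  rw [ddist, dif_pos ⟨s, hs⟩]
  exact Finset.inf'_le _ hs

lemma ddist_le_dist_add_ddist (x y : V) (S : Finset V) : ddist x S ≤ dist x y + ddist y S := by
  rcases S.eq_empty_or_nonempty with rfl | hS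
  · simp [ddist]
  obtain ⟨s, hs, hy⟩ := Finset.exists_mem_eq_inf' hS (fun s => dist y s)
  have hys : ddist y S = dist y s := by rw [ddist, dif_pos hS, hy]
  rw [hys]
  exact (ddist_le_dist x hs).trans (dist_triangle x y s)

variable [Fintype V] [DecidableEq V]

lemma sum_mul_ddist_erase_le (ω : V → ℝ) (hω : ∀ v, 0 ≤ ω v) {S : Finset V} (σ : V → V)
    (hσ : ∀ v, σ v ∈ S) (r : V) :
    ∑ v, ω v * ddist v (S.erase r) ≤
      ∑ v, ω v * dist v (σ v) +
        (∑ v ∈ Finset.univ.filter (fun v => σ v = r), ω v) * ddist r (S.erase r) := by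
  have hterm : ∀ v, ω v * ddist v (S.erase r) ≤
      ω v * dist v (σ v) + if σ v = r then ω v * ddist r (S.erase r) else 0 := by
    intro v
    split_ifs with hvr
    · rw [← mul_add, ← hvr]
      exact mul_le_mul_of_nonneg_left (ddist_le_dist_add_ddist _ _ _) (hω v)
    · rw [add_zero]
      exact mul_le_mul_of_nonneg_left
        (ddist_le_dist v (Finset.mem_erase.mpr ⟨hvr, hσ v⟩)) (hω v)
  calc ∑ v, ω v * ddist v (S.erase r)
      ≤ ∑ v, (ω v * dist v (σ v) + if σ v = r then ω v * ddist r (S.erase r) else 0) :=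
        Finset.sum_le_sum fun v _ => hterm v
    _ = _ := by rw [Finset.sum_add_distrib, Finset.sum_mul, Finset.sum_filter]

end ddist

theorem stmt_8_general {V : Type*} [MetricSpace V] [Fintype V] [DecidableEq V]
    (ω f : V → ℝ) (hω : ∀ v, 0 ≤ ω v)
    (R₁ R₂ : Finset V) (hdisj : Disjoint R₁ R₂) (h₁ : R₁.Nonempty)
    (h₁₂ : (R₁ ∪ R₂).Nonempty)
    (σ : V → V) (hσ : ∀ v, σ v ∈ R₁ ∧ dist v (σ v) = ddist v R₁)
    (ω' : V → ℝ) (hω' : ∀ r, ω' r = ∑ v ∈ Finset.univ.filter (fun v => σ v = r), ω v) :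
    (∑ r ∈ R₁ ∪ R₂, f r) +
      (R₁ ∪ R₂).sup' h₁₂ (fun r => ∑ v : V, ω v * ddist v ((R₁ ∪ R₂).erase r)) ≤
    ((∑ r ∈ R₁, f r) + ∑ v : V, ω v * ddist v R₁) +
      ((∑ r ∈ R₂, f r) +
        R₁.sup' h₁ (fun r => ω' r * ddist r ((R₁ ∪ R₂).erase r))) := by
  set backup := fun r => ω' r * ddist r ((R₁ ∪ R₂).erase r)
  have hbackup_nonneg : 0 ≤ R₁.sup' h₁ backup := by
    obtain ⟨r, hr⟩ := h₁
    refine Finset.le_sup'_of_le backup hr (mul_nonneg ?_ (ddist_nonneg _ _))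
    rw [hω' r]
    exact Finset.sum_nonneg fun v _ => hω v
  have hbackup_le : ∀ r, backup r ≤ R₁.sup' h₁ backup := by
    intro r
    by_cases hr : r ∈ R₁
    · exact Finset.le_sup' backup hr
    · have hω'r : ω' r = 0 := by
        rw [hω' r, Finset.sum_eq_zero]
        intro v hv
        exact absurd ((Finset.mem_filter.mp hv).2 ▸ (hσ v).1) hr
      simpa [backup, hω'r] using hbackup_nonneg
  have hship : (R₁ ∪ R₂).sup' h₁₂ (fun r => ∑ v : V, ω v * ddist v ((R₁ ∪ R₂).erase r)) ≤
      ∑ v, ω v * ddist v R₁ + R₁.sup' h₁ backup := by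
    refine Finset.sup'_le _ _ fun r _ => ?_
    have h := sum_mul_ddist_erase_le ω hω σ (fun v => Finset.mem_union_left R₂ (hσ v).1) r
    simp only [(hσ _).2, ← hω' r] at h
    linarith [hbackup_le r]
  rw [Finset.sum_union hdisj]
  linarith

/-- Lemma 2.7: the robust fault-tolerant cost of R₁ ∪ R₂ is bounded by
the UFL cost of R₁ plus the concentrated-backup cost of R₂ relative to R₁. -/
theorem stmt_8 {V : Type*} [MetricSpace V] [Fintype V] [DecidableEq V]
    (ω f : V → ℝ) (hω : ∀ v, 0 ≤ ω v) (hf : ∀ v, 0 ≤ f v)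
    (R₁ R₂ : Finset V) (hdisj : Disjoint R₁ R₂) (h₁ : R₁.Nonempty)
    (hcard : 2 ≤ (R₁ ∪ R₂).card) (h₁₂ : (R₁ ∪ R₂).Nonempty)
    (σ : V → V) (hσ : ∀ v, σ v ∈ R₁ ∧ dist v (σ v) = ddist v R₁)
    (ω' : V → ℝ) (hω' : ∀ r, ω' r = ∑ v ∈ Finset.univ.filter (fun v => σ v = r), ω v) :
    (∑ r ∈ R₁ ∪ R₂, f r) +
      (R₁ ∪ R₂).sup' h₁₂ (fun r => ∑ v : V, ω v * ddist v ((R₁ ∪ R₂).erase r)) ≤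
    ((∑ r ∈ R₁, f r) + ∑ v : V, ω v * ddist v R₁) +
      ((∑ r ∈ R₂, f r) +
        R₁.sup' h₁ (fun r => ω' r * ddist r ((R₁ ∪ R₂).erase r))) :=
  stmt_8_general ω f hω R₁ R₂ hdisj h₁ h₁₂ σ hσ ω' hω'
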